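/- arXiv:2409.09219 — 4 statements merged into one kernel-verified Lean document; each statement's English description precedes it below -/
import Mathlib

section
/- Let δ, ν, t ≥ 0 be real numbers and k, ℓ integers. Define ζ_m = exp(δ ν^(1/3)(1+|m|^(2/3)) t) for an integer m. Then |ζ_k − ζ_{k−ℓ}| ≤ δ ν^(1/3) |ℓ|^(2/3) t · ζ_{k−ℓ} · ζ_ℓ. -/
/-!
Write `ζ_m = exp (c (1 + |m|^{2/3}))` with `c = δ ν^{1/3} t ≥ 0`. Since `s ↦ s^{2/3}` is
subadditive on `[0, ∞)`, the exponents of `ζ_k` and `ζ_{k-ℓ}` differ by at most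
`d = c |ℓ|^{2/3}`. By the mean value theorem, `|ζ_k - ζ_{k-ℓ}| ≤ d · exp (max of the exponents)`,
and that maximum is at most the exponent of `ζ_{k-ℓ}` plus `d ≤ c (1 + |ℓ|^{2/3})`.
-/

open Real

namespace Real

theorem exp_sub_exp_le_mul_exp (a b : ℝ) : exp b - exp a ≤ (b - a) * exp b :=
  calc exp b - exp a = (1 - exp (a - b)) * exp b := by
        rw [sub_mul, one_mul, ← exp_add, sub_add_cancel]
    _ ≤ (b - a) * exp b :=
        mul_le_mul_of_nonneg_right (by linarith [add_one_le_exp (a - b)]) (exp_pos b).le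

theorem abs_exp_sub_exp_le (a b : ℝ) : |exp a - exp b| ≤ |a - b| * exp (max a b) := by
  wlog hab : a ≤ b generalizing a b
  · simpa only [abs_sub_comm, max_comm] using this b a (le_of_not_ge hab)
  rw [abs_sub_comm, abs_of_nonneg (sub_nonneg.2 (exp_le_exp.2 hab)),
    abs_sub_comm, abs_of_nonneg (sub_nonneg.2 hab), max_eq_right hab]
  exact exp_sub_exp_le_mul_exp a b

theorem abs_rpow_sub_rpow_le {p a b : ℝ} (ha : 0 ≤ a) (hb : 0 ≤ b) (hp0 : 0 ≤ p) (hp1 : p ≤ 1) :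
    |a ^ p - b ^ p| ≤ |a - b| ^ p := by
  wlog hba : b ≤ a generalizing a b
  · simpa only [abs_sub_comm] using this hb ha (le_of_not_ge hba)
  have hmono : b ^ p ≤ a ^ p := rpow_le_rpow hb hba hp0
  have hsubadd : a ^ p ≤ (a - b) ^ p + b ^ p := by
    simpa only [sub_add_cancel] using rpow_add_le_add_rpow (sub_nonneg.2 hba) hb hp0 hp1
  rw [abs_of_nonneg (sub_nonneg.2 hmono), abs_of_nonneg (sub_nonneg.2 hba)]
  linarith

theorem abs_abs_rpow_sub_abs_rpow_le {p : ℝ} (hp0 : 0 ≤ p) (hp1 : p ≤ 1) (x y : ℝ) :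
    |(|x| ^ p - |y| ^ p)| ≤ |x - y| ^ p :=
  (abs_rpow_sub_rpow_le (abs_nonneg x) (abs_nonneg y) hp0 hp1).trans
    (rpow_le_rpow (abs_nonneg _) (abs_abs_sub_abs_le_abs_sub x y) hp0)

end Real

theorem abs_exp_weight_sub_exp_weight_le {c p : ℝ} (hc : 0 ≤ c) (hp0 : 0 ≤ p) (hp1 : p ≤ 1)
    (x y : ℝ) :
    |exp (c * (1 + |x| ^ p)) - exp (c * (1 + |y| ^ p))| ≤
      c * |x - y| ^ p * (exp (c * (1 + |y| ^ p)) * exp (c * (1 + |x - y| ^ p))) := by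
  set a := c * (1 + |x| ^ p)
  set b := c * (1 + |y| ^ p)
  set d := c * |x - y| ^ p
  have hab : |a - b| ≤ d := by
    rw [show a - b = c * (|x| ^ p - |y| ^ p) by ring, abs_mul, abs_of_nonneg hc]
    exact mul_le_mul_of_nonneg_left (abs_abs_rpow_sub_abs_rpow_le hp0 hp1 x y) hc
  have hmax : max a b ≤ b + d :=
    max_le (by linarith [le_abs_self (a - b)]) (by linarith [abs_nonneg (a - b)])
  calc |exp a - exp b| ≤ |a - b| * exp (max a b) := abs_exp_sub_exp_le a b
    _ ≤ d * exp (b + d) := by gcongr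
    _ ≤ d * (exp b * exp (c * (1 + |x - y| ^ p))) := by
      rw [exp_add]
      gcongr
      linarith

theorem zeta_commutator_bound (δ ν t : ℝ) (hδ : 0 ≤ δ) (hν : 0 ≤ ν) (ht : 0 ≤ t) (k ℓ : ℤ) :
    |Real.exp (δ * ν ^ ((1 : ℝ) / 3) * (1 + |(k : ℝ)| ^ ((2 : ℝ) / 3)) * t) -
        Real.exp (δ * ν ^ ((1 : ℝ) / 3) * (1 + |((k - ℓ : ℤ) : ℝ)| ^ ((2 : ℝ) / 3)) * t)| ≤
      δ * ν ^ ((1 : ℝ) / 3) * |(ℓ : ℝ)| ^ ((2 : ℝ) / 3) * t *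
        (Real.exp (δ * ν ^ ((1 : ℝ) / 3) * (1 + |((k - ℓ : ℤ) : ℝ)| ^ ((2 : ℝ) / 3)) * t) *
          Real.exp (δ * ν ^ ((1 : ℝ) / 3) * (1 + |(ℓ : ℝ)| ^ ((2 : ℝ) / 3)) * t)) := by
  have hc : 0 ≤ δ * ν ^ ((1 : ℝ) / 3) * t := by positivity
  have hdiff : (k : ℝ) - ((k - ℓ : ℤ) : ℝ) = ℓ := by push_cast; ring
  have key := abs_exp_weight_sub_exp_weight_le hc (p := 2 / 3) (by norm_num) (by norm_num)
    (k : ℝ) ((k - ℓ : ℤ) : ℝ)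
  rw [hdiff] at key
  convert key using 1 <;> ring_nf
end

section
/- Let K ≥ 1, ν ∈ (0,1], and let k be an integer with 0 < |k| ≤ ν^(−1/2). Define W_ν(t,k,η) = π − arctan((ν^(1/3)|k|^(2/3)/K)(t − η/k)). Then for all t, η ∈ ℝ: −(∂_t W_ν / W_ν)(t,k,η) + ν(k² + (η − kt)²) ≥ c ν^(1/3) |k|^(2/3) with c = 2/(9Kπ²). -/
open Real

/-!
Put `c = ν^{1/3}|k|^{2/3}`, `a = c/K` and `u = a (t - η/k)`. Then `-∂ₜW/W = a / ((1 + u²) W)` with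
`W = π - arctan u ∈ (π/2, 3π/2]`, so where `|u| ≤ 1` this rate alone is at least `a / (3π)`. Where
`|u| > 1`, i.e. `c² (t - η/k)² > K²`, the dissipation takes over: since `c³ = ν k²`,
`ν (η - k t)² = c³ (t - η/k)² > c K²`.
-/

lemma hasDerivAt_pi_sub_arctan_mul_sub (a b t : ℝ) :
    HasDerivAt (fun s => π - arctan (a * (s - b))) (-(a / (1 + (a * (t - b)) ^ 2))) t := by
  have hlin : HasDerivAt (fun s => a * (s - b)) a t := by
    simpa using ((hasDerivAt_id t).sub_const b).const_mul a
  exact ((hasDerivAt_const t π).sub ((hasDerivAt_arctan _).comp t hlin)).congr_deriv (by ring)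

lemma pi_sub_arctan_pos (u : ℝ) : 0 < π - arctan u := by
  linarith [arctan_lt_pi_div_two u, pi_pos]

lemma pi_sub_arctan_le (u : ℝ) : π - arctan u ≤ 3 * π / 2 := by
  linarith [neg_pi_div_two_lt_arctan u]

lemma div_three_pi_le_of_sq_le_one {a u : ℝ} (ha : 0 ≤ a) (hu : u ^ 2 ≤ 1) :
    a / (3 * π) ≤ a / (1 + u ^ 2) / (π - arctan u) := by
  rw [div_div]
  refine div_le_div_of_nonneg_left ha (by positivity [pi_sub_arctan_pos u]) ?_
  calc (1 + u ^ 2) * (π - arctan u) ≤ 2 * (3 * π / 2) :=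
        mul_le_mul (by linarith) (pi_sub_arctan_le u) (pi_sub_arctan_pos u).le zero_le_two
    _ = 3 * π := by ring

lemma rpow_div_three_pow_three {x : ℝ} (hx : 0 ≤ x) (p : ℝ) : (x ^ (p / 3)) ^ 3 = x ^ p := by
  rw [← rpow_natCast, ← rpow_mul hx]
  norm_num

/-- `η / 0 = 0` makes the left side vanish at `k = 0`; otherwise both sides agree. -/
lemma sq_mul_sq_sub_div_le (k η t : ℝ) : k ^ 2 * (t - η / k) ^ 2 ≤ (η - k * t) ^ 2 := by
  rcases eq_or_ne k 0 with rfl | hk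
  · simpa using sq_nonneg η
  · refine le_of_eq ?_
    field_simp
    ring

lemma multiplier_rate_add_dissipation_lower_bound {K c x D : ℝ} (hK : 1 ≤ K) (hc : 0 ≤ c)
    (hD : c ^ 3 * x ^ 2 ≤ D) :
    2 / (9 * K * π ^ 2) * c ≤
      c / K / (1 + (c / K * x) ^ 2) / (π - arctan (c / K * x)) + D := by
  have hK0 : 0 < K := by linarith
  have hrate : 0 ≤ c / K / (1 + (c / K * x) ^ 2) / (π - arctan (c / K * x)) := by
    have := pi_sub_arctan_pos (c / K * x)
    positivity
  have hD0 : 0 ≤ D := le_trans (by positivity) hD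
  rcases le_or_gt ((c / K * x) ^ 2) 1 with hsmall | hlarge
  · have hconst : 2 / (9 * K * π ^ 2) * c ≤ c / K / (3 * π) := by
      rw [div_div, div_mul_eq_mul_div, div_le_div_iff₀ (by positivity) (by positivity)]
      have hπ : 6 * π ≤ 9 * π ^ 2 := by nlinarith [pi_gt_three]
      nlinarith [mul_le_mul_of_nonneg_left hπ (mul_nonneg hc hK0.le)]
    linarith [div_three_pi_le_of_sq_le_one (div_nonneg hc hK0.le) hsmall]
  · have hcx : K ^ 2 < c ^ 2 * x ^ 2 := by
      rw [mul_pow, div_pow, div_mul_eq_mul_div, one_lt_div (by positivity)] at hlarge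
      linarith
    have hdiss : c * K ^ 2 ≤ D :=
      calc c * K ^ 2 ≤ c * (c ^ 2 * x ^ 2) := mul_le_mul_of_nonneg_left hcx.le hc
        _ = c ^ 3 * x ^ 2 := by ring
        _ ≤ D := hD
    have hconst : 2 / (9 * K * π ^ 2) ≤ K ^ 2 := by
      rw [div_le_iff₀ (by positivity)]
      have hπ : 9 ≤ π ^ 2 := by nlinarith [pi_gt_three]
      have hK3 : 1 ≤ K ^ 2 * K := one_le_mul_of_one_le_of_one_le (one_le_pow₀ hK) hK
      nlinarith
    nlinarith

theorem enhanced_dissipation_multiplier_lower_bound_general (K ν : ℝ) (hK : 1 ≤ K) (hν : 0 < ν)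
    (k : ℤ) (η : ℝ) :
    ∀ t : ℝ,
      2 / (9 * K * π ^ 2) * (ν ^ ((1 : ℝ) / 3) * |(k : ℝ)| ^ ((2 : ℝ) / 3)) ≤
        -(deriv (fun s : ℝ =>
              π - Real.arctan (ν ^ ((1 : ℝ) / 3) * |(k : ℝ)| ^ ((2 : ℝ) / 3) / K *
                (s - η / (k : ℝ)))) t) /
            (π - Real.arctan (ν ^ ((1 : ℝ) / 3) * |(k : ℝ)| ^ ((2 : ℝ) / 3) / K *
              (t - η / (k : ℝ)))) +
          ν * ((k : ℝ) ^ 2 + (η - (k : ℝ) * t) ^ 2) := by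
  intro t
  set c := ν ^ ((1 : ℝ) / 3) * |(k : ℝ)| ^ ((2 : ℝ) / 3)
  have hc : 0 ≤ c := by positivity
  have hcube : c ^ 3 = ν * (k : ℝ) ^ 2 := by
    rw [mul_pow, rpow_div_three_pow_three hν.le, rpow_div_three_pow_three (abs_nonneg _),
      rpow_one, rpow_two, sq_abs]
  rw [(hasDerivAt_pi_sub_arctan_mul_sub _ _ t).deriv, neg_neg]
  refine multiplier_rate_add_dissipation_lower_bound hK hc ?_
  calc c ^ 3 * (t - η / k) ^ 2 = ν * ((k : ℝ) ^ 2 * (t - η / k) ^ 2) := by rw [hcube]; ring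
    _ ≤ ν * (η - k * t) ^ 2 := mul_le_mul_of_nonneg_left (sq_mul_sq_sub_div_le _ _ _) hν.le
    _ ≤ ν * ((k : ℝ) ^ 2 + (η - k * t) ^ 2) := by nlinarith [sq_nonneg (k : ℝ)]

theorem enhanced_dissipation_multiplier_lower_bound (K ν : ℝ) (hK : 1 ≤ K) (hν : 0 < ν)
    (hν1 : ν ≤ 1) (k : ℤ) (hk : 0 < |(k : ℝ)|) (hk2 : |(k : ℝ)| ≤ ν ^ (-(1 : ℝ) / 2)) (η : ℝ) :
    ∀ t : ℝ,
      2 / (9 * K * π ^ 2) * (ν ^ ((1 : ℝ) / 3) * |(k : ℝ)| ^ ((2 : ℝ) / 3)) ≤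
        -(deriv (fun s : ℝ =>
              π - Real.arctan (ν ^ ((1 : ℝ) / 3) * |(k : ℝ)| ^ ((2 : ℝ) / 3) / K *
                (s - η / (k : ℝ)))) t) /
            (π - Real.arctan (ν ^ ((1 : ℝ) / 3) * |(k : ℝ)| ^ ((2 : ℝ) / 3) / K *
              (t - η / (k : ℝ)))) +
          ν * ((k : ℝ) ^ 2 + (η - (k : ℝ) * t) ^ 2) :=
  enhanced_dissipation_multiplier_lower_bound_general K ν hK hν k η
end

section
/- Let K ≥ 1. Let k, ℓ be integers with k(k−ℓ) > 0 and ℓ ≠ 0, let t, η, ξ be real, and define W_I(t,m,ζ) = π − arctan((ζ − mt)/(Km)) for a nonzero integer m. Then |W_I(t,k,η) − W_I(t,k−ℓ,η−ξ)| ≤ C (|ξ − ℓt| + |ℓ|) / min(|k|, |k−ℓ|) for an absolute constant C. -/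
/-! Write both arguments of `arctan` as `y / x` with `x = K k` resp. `K (k - ℓ)`, which have the
same sign. Along the segment joining the two points `(x, y)` the first coordinate stays at least
`K min(|k|, |k - ℓ|)` in absolute value, and the derivative of `arctan (y / x)` along it is
`(y' x - y x') / (x² + y²)`, bounded by `(|x'| + |y'|) / |x|`. With `x' = K ℓ`, `y' = ξ - ℓ t` and
`K ≥ 1`, the mean value theorem gives the claim with `C = 1`. -/

open Real Set

lemma HasDerivAt.arctan_div {f g : ℝ → ℝ} {f' g' x : ℝ} (hf : HasDerivAt f f' x)
    (hg : HasDerivAt g g' x) (hx : g x ≠ 0) :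
    HasDerivAt (fun t => Real.arctan (f t / g t))
      ((f' * g x - f x * g') / (g x ^ 2 + f x ^ 2)) x := by
  refine (hf.div hg hx).arctan.congr_deriv ?_
  rw [Pi.div_apply]
  field_simp

lemma abs_mul_sub_mul_div_sq_add_sq_le (x y x' y' : ℝ) (hx : x ≠ 0) :
    |(y' * x - y * x') / (x ^ 2 + y ^ 2)| ≤ (|x'| + |y'|) / |x| := by
  have hx' : 0 < |x| := abs_pos.2 hx
  have hd : 0 < x ^ 2 + y ^ 2 := by positivity
  rw [abs_div, abs_of_pos hd, div_le_div_iff₀ hd hx']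
  have hxy : |y| * |x| ≤ x ^ 2 + y ^ 2 := by
    nlinarith [sq_nonneg (|x| - |y|), sq_abs x, sq_abs y]
  have hxx : |x| * |x| ≤ x ^ 2 + y ^ 2 := by nlinarith [sq_abs x, sq_nonneg y]
  calc |y' * x - y * x'| * |x| ≤ (|y'| * |x| + |y| * |x'|) * |x| := by
        gcongr
        simpa only [abs_mul] using abs_sub (y' * x) (y * x')
    _ = |y'| * (|x| * |x|) + |x'| * (|y| * |x|) := by ring
    _ ≤ |y'| * (x ^ 2 + y ^ 2) + |x'| * (x ^ 2 + y ^ 2) := by gcongr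
    _ = (|x'| + |y'|) * (x ^ 2 + y ^ 2) := by ring

lemma min_abs_le_abs_add_mul_sub {a b θ : ℝ} (hab : 0 < a * b) (hθ : θ ∈ Icc (0 : ℝ) 1) :
    min |a| |b| ≤ |a + θ * (b - a)| := by
  obtain ⟨hθ0, hθ1⟩ := hθ
  rcases mul_pos_iff.1 hab with ⟨ha, hb⟩ | ⟨ha, hb⟩
  · rw [abs_of_pos ha, abs_of_pos hb]
    refine le_trans ?_ (le_abs_self _)
    rcases le_total a b with h | h
    · rw [min_eq_left h]; nlinarith
    · rw [min_eq_right h]; nlinarith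
  · rw [abs_of_neg ha, abs_of_neg hb]
    refine le_trans ?_ (neg_le_abs _)
    rcases le_total a b with h | h
    · rw [min_eq_right (neg_le_neg h)]; nlinarith
    · rw [min_eq_left (neg_le_neg h)]; nlinarith

lemma abs_arctan_div_sub_arctan_div_le {x₀ x₁ y₀ y₁ : ℝ} (hx : 0 < x₀ * x₁) :
    |arctan (y₁ / x₁) - arctan (y₀ / x₀)| ≤ (|x₁ - x₀| + |y₁ - y₀|) / min |x₀| |x₁| := by
  set X : ℝ → ℝ := fun θ => x₀ + θ * (x₁ - x₀)
  set Y : ℝ → ℝ := fun θ => y₀ + θ * (y₁ - y₀)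
  have hX : ∀ θ ∈ Icc (0 : ℝ) 1, min |x₀| |x₁| ≤ |X θ| := fun θ hθ =>
    min_abs_le_abs_add_mul_sub hx hθ
  have hm : 0 < min |x₀| |x₁| :=
    lt_min (abs_pos.2 (left_ne_zero_of_mul hx.ne')) (abs_pos.2 (right_ne_zero_of_mul hx.ne'))
  have hderiv : ∀ θ ∈ Icc (0 : ℝ) 1, HasDerivAt (fun θ => arctan (Y θ / X θ))
      (((y₁ - y₀) * X θ - Y θ * (x₁ - x₀)) / (X θ ^ 2 + Y θ ^ 2)) θ := by
    intro θ hθ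
    have hXθ : X θ ≠ 0 := abs_pos.1 (hm.trans_le (hX θ hθ))
    have hline : ∀ c d : ℝ, HasDerivAt (fun θ => c + θ * d) d θ := fun c d => by
      simpa using ((hasDerivAt_id θ).mul_const d).const_add c
    exact (hline y₀ (y₁ - y₀)).arctan_div (hline x₀ (x₁ - x₀)) hXθ
  have hbound : ∀ θ ∈ Icc (0 : ℝ) 1,
      ‖((y₁ - y₀) * X θ - Y θ * (x₁ - x₀)) / (X θ ^ 2 + Y θ ^ 2)‖ ≤
        (|x₁ - x₀| + |y₁ - y₀|) / min |x₀| |x₁| := fun θ hθ =>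
    (abs_mul_sub_mul_div_sq_add_sq_le _ _ _ _ (abs_pos.1 (hm.trans_le (hX θ hθ)))).trans
      (div_le_div_of_nonneg_left (by positivity) hm (hX θ hθ))
  have := (convex_Icc (0 : ℝ) 1).norm_image_sub_le_of_norm_hasDerivWithin_le
    (fun θ hθ => (hderiv θ hθ).hasDerivWithinAt) hbound
    (left_mem_Icc.2 zero_le_one) (right_mem_Icc.2 zero_le_one)
  simpa [X, Y] using this

theorem inviscid_multiplier_commutator :
    ∃ C > 0, ∀ (K : ℝ), 1 ≤ K → ∀ (k ℓ : ℤ), 0 < k * (k - ℓ) → ℓ ≠ 0 →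
      ∀ t η ξ : ℝ,
        |(π - Real.arctan ((η - (k : ℝ) * t) / (K * (k : ℝ)))) -
            (π - Real.arctan ((η - ξ - ((k : ℝ) - (ℓ : ℝ)) * t) / (K * ((k : ℝ) - (ℓ : ℝ)))))| ≤
          C * (|ξ - (ℓ : ℝ) * t| + |(ℓ : ℝ)|) / min |(k : ℝ)| |(k : ℝ) - (ℓ : ℝ)| := by
  refine ⟨1, one_pos, fun K hK₁ k ℓ hkℓ _ t η ξ => ?_⟩
  have hK : 0 < K := one_pos.trans_le hK₁
  have hkℓ : 0 < (k : ℝ) * (k - ℓ) := by exact_mod_cast hkℓ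
  have hm : 0 < min |(k : ℝ)| |(k : ℝ) - ℓ| :=
    lt_min (abs_pos.2 (left_ne_zero_of_mul hkℓ.ne')) (abs_pos.2 (right_ne_zero_of_mul hkℓ.ne'))
  have harctan := abs_arctan_div_sub_arctan_div_le (y₀ := η - ξ - ((k : ℝ) - ℓ) * t)
    (y₁ := η - k * t) (show 0 < K * ((k : ℝ) - ℓ) * (K * k) by nlinarith [mul_pos hK hK])
  rw [sub_sub_sub_cancel_left, abs_sub_comm, one_mul]
  refine harctan.trans ?_
  rw [show K * k - K * (k - ℓ) = K * ℓ by ring,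
    show η - k * t - (η - ξ - (k - ℓ) * t) = ξ - ℓ * t by ring,
    abs_mul K, abs_mul K, abs_mul K, abs_of_pos hK, ← mul_min_of_nonneg _ _ hK.le, min_comm,
    div_le_div_iff₀ (by positivity) hm]
  nlinarith [mul_nonneg (abs_nonneg (ξ - ℓ * t)) hm.le]
end

section
/- Let K ≥ 1, t ∈ ℝ, k an integer, η real, and define W_E(t,k,η) = π + (1/π²) Σ_{ℓ ∈ ℤ∖{0}} (1/ℓ²)·(ℓ/|ℓ|)·arctan((η − ℓt)/(K(1 + |k−ℓ| + |ℓ|))). Then W_E is differentiable in t and −∂_t W_E(t,k,η) ≥ (1/π²) Σ_{ℓ≠0} (1/|ℓ|) · (1 + |k−ℓ| + |ℓ|) / (K(1 + |k−ℓ| + |ℓ|)² + K^(−1)(η − ℓt)²) > 0. -/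
open Real

/-- The echo-cascade multiplier `W_E(t, k, η)` of Wei–Zhao. -/
noncomputable def WE (K : ℝ) (k : ℤ) (η : ℝ) (t : ℝ) : ℝ :=
  π + (1 / π ^ 2) * ∑' ℓ : {ℓ : ℤ // ℓ ≠ 0},
    (1 / ((ℓ : ℤ) : ℝ) ^ 2) * (((ℓ : ℤ) : ℝ) / |((ℓ : ℤ) : ℝ)|) *
      Real.arctan ((η - ((ℓ : ℤ) : ℝ) * t) /
        (K * (1 + |(k : ℝ) - ((ℓ : ℤ) : ℝ)| + |((ℓ : ℤ) : ℝ)|)))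

/-- The lower bound for `-∂ₜ W_E`. -/
noncomputable def WEsum (K : ℝ) (k : ℤ) (η : ℝ) (t : ℝ) : ℝ :=
  (1 / π ^ 2) * ∑' ℓ : {ℓ : ℤ // ℓ ≠ 0},
    (1 / |((ℓ : ℤ) : ℝ)|) * (1 + |(k : ℝ) - ((ℓ : ℤ) : ℝ)| + |((ℓ : ℤ) : ℝ)|) /
      (K * (1 + |(k : ℝ) - ((ℓ : ℤ) : ℝ)| + |((ℓ : ℤ) : ℝ)|) ^ 2 +
        K⁻¹ * (η - ((ℓ : ℤ) : ℝ) * t) ^ 2)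

/-!
Write `d_ℓ = 1 + |k - ℓ| + |ℓ|`. Each term `sign ℓ / ℓ² · arctan ((η - ℓ t) / (K d_ℓ))` is
decreasing in `t`, with derivative `-(1/|ℓ|) d_ℓ / (K d_ℓ² + K⁻¹ (η - ℓ t)²)`: the factor `sign ℓ`
compensates the `-ℓ` produced by the chain rule. Since `d_ℓ ≥ |ℓ|` and `K ≥ 1`, these derivatives
are bounded by `1 / ℓ²` uniformly in `t`, so the series may be differentiated term by term, and
`-∂ₜ W_E` equals the (positive) lower bound exactly.
-/

namespace EchoMultiplier

noncomputable def width (k L : ℝ) : ℝ :=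
  1 + |k - L| + |L|

theorem abs_le_width (k L : ℝ) : |L| ≤ width k L := by
  unfold width
  linarith [abs_nonneg (k - L)]

theorem width_pos (k L : ℝ) : 0 < width k L := by
  unfold width
  positivity

/-- The `ℓ`-th term of `W_E` is `term K (width k ℓ) ℓ η t`. -/
noncomputable def term (K d L η t : ℝ) : ℝ :=
  1 / L ^ 2 * (L / |L|) * arctan ((η - L * t) / (K * d))

/-- The `ℓ`-th term of `WEsum` is `rate K (width k ℓ) ℓ (η - ℓ t)`. -/
noncomputable def rate (K d L x : ℝ) : ℝ :=
  1 / |L| * d / (K * d ^ 2 + K⁻¹ * x ^ 2)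

variable {K d L : ℝ}

theorem hasDerivAt_arctan_sub_mul_div {D : ℝ} (hD : D ≠ 0) (η L t : ℝ) :
    HasDerivAt (fun t => arctan ((η - L * t) / D)) (-L * D / (D ^ 2 + (η - L * t) ^ 2)) t := by
  refine ((((hasDerivAt_id t).const_mul L).const_sub η).div_const D).arctan.congr_deriv ?_
  field_simp
  simp only [id]

theorem hasDerivAt_term (hK : 0 < K) (hd : 0 < d) (hL : L ≠ 0) (η t : ℝ) :
    HasDerivAt (term K d L η) (-rate K d L (η - L * t)) t := by
  refine ((hasDerivAt_arctan_sub_mul_div (mul_pos hK hd).ne' η L t).const_mul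
    (1 / L ^ 2 * (L / |L|))).congr_deriv ?_
  have habs : |L| ≠ 0 := abs_ne_zero.mpr hL
  unfold rate
  field_simp

theorem rate_pos (hK : 0 < K) (hd : 0 < d) (hL : L ≠ 0) (x : ℝ) : 0 < rate K d L x := by
  unfold rate
  positivity

theorem rate_le_one_div_sq (hK : 1 ≤ K) (hL : L ≠ 0) (hLd : |L| ≤ d) (x : ℝ) :
    rate K d L x ≤ 1 / L ^ 2 := by
  have hK0 : 0 < K := zero_lt_one.trans_le hK
  have hL0 : 0 < |L| := abs_pos.mpr hL
  have hd : 0 < d := hL0.trans_le hLd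
  calc rate K d L x ≤ 1 / |L| * d / (K * d ^ 2) := by
        unfold rate
        gcongr
        exact le_add_of_nonneg_right (by positivity)
    _ = 1 / (|L| * (K * d)) := by field_simp
    _ ≤ 1 / (|L| * |L|) := by
        gcongr
        exact hLd.trans (le_mul_of_one_le_left hd.le hK)
    _ = 1 / L ^ 2 := by rw [abs_mul_abs_self, sq]

theorem abs_term_le (K d L η t : ℝ) : |term K d L η t| ≤ π / 2 * (1 / L ^ 2) := by
  have hsign : |(L / |L|)| ≤ 1 := by
    rw [abs_div, abs_abs]
    exact div_self_le_one _
  have harctan : |arctan ((η - L * t) / (K * d))| ≤ π / 2 :=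
    abs_le.mpr ⟨(neg_pi_div_two_lt_arctan _).le, (arctan_lt_pi_div_two _).le⟩
  unfold term
  rw [abs_mul, abs_mul, abs_of_nonneg (by positivity : 0 ≤ 1 / L ^ 2), mul_comm]
  exact mul_le_mul harctan (mul_le_of_le_one_right (by positivity) hsign) (by positivity)
    (by positivity)

theorem summable_one_div_sq_int_ne_zero :
    Summable fun ℓ : {ℓ : ℤ // ℓ ≠ 0} => 1 / ((ℓ : ℤ) : ℝ) ^ 2 :=
  (summable_one_div_int_pow.mpr one_lt_two).subtype _

end EchoMultiplier

open EchoMultiplier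

theorem hasDerivAt_WE {K : ℝ} (hK : 1 ≤ K) (k : ℤ) (η t : ℝ) :
    HasDerivAt (WE K k η) (-WEsum K k η t) t := by
  have hK0 : 0 < K := zero_lt_one.trans_le hK
  have hL (ℓ : {ℓ : ℤ // ℓ ≠ 0}) : ((ℓ : ℤ) : ℝ) ≠ 0 := Int.cast_ne_zero.mpr ℓ.2
  have hseries := hasDerivAt_tsum summable_one_div_sq_int_ne_zero
    (fun ℓ y => hasDerivAt_term hK0 (width_pos k ℓ) (hL ℓ) η y)
    (fun ℓ y => by
      rw [norm_neg, norm_of_nonneg (rate_pos hK0 (width_pos k ℓ) (hL ℓ) _).le]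
      exact rate_le_one_div_sq hK (hL ℓ) (abs_le_width k ℓ) _)
    ((summable_one_div_sq_int_ne_zero.mul_left (π / 2)).of_norm_bounded
      fun ℓ => abs_term_le _ _ _ η 0) t
  have hWE := (hseries.const_mul (1 / π ^ 2)).const_add π
  rwa [tsum_neg, mul_neg] at hWE

theorem WEsum_pos {K : ℝ} (hK : 1 ≤ K) (k : ℤ) (η t : ℝ) : 0 < WEsum K k η t := by
  let r (ℓ : {ℓ : ℤ // ℓ ≠ 0}) : ℝ := rate K (width k ℓ) ℓ (η - ℓ * t)
  have hL (ℓ : {ℓ : ℤ // ℓ ≠ 0}) : ((ℓ : ℤ) : ℝ) ≠ 0 := Int.cast_ne_zero.mpr ℓ.2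
  have hpos (ℓ : {ℓ : ℤ // ℓ ≠ 0}) : 0 < r ℓ :=
    rate_pos (zero_lt_one.trans_le hK) (width_pos k ℓ) (hL ℓ) _
  have hsummable : Summable r :=
    summable_one_div_sq_int_ne_zero.of_nonneg_of_le (fun ℓ => (hpos ℓ).le)
      fun ℓ => rate_le_one_div_sq hK (hL ℓ) (abs_le_width k ℓ) _
  exact mul_pos (by positivity) <|
    hsummable.tsum_pos (fun ℓ => (hpos ℓ).le) ⟨1, one_ne_zero⟩ (hpos _)

theorem echo_multiplier_time_derivative (K : ℝ) (hK : 1 ≤ K) (k : ℤ) (η t : ℝ) :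
    DifferentiableAt ℝ (WE K k η) t ∧
    WEsum K k η t ≤ - deriv (WE K k η) t ∧
    0 < WEsum K k η t := by
  have h := hasDerivAt_WE hK k η t
  exact ⟨h.differentiableAt, by rw [h.deriv, neg_neg], WEsum_pos hK k η t⟩
end
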